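/- arXiv:1403.5735 — 3 statements merged into one kernel-verified Lean document; each statement's English description precedes it below -/
import Mathlib

section
/- Suppose ({w_k}, {G_{b,i}}, {G_{s,i}}) is feasible for problem (P1) and for some index i both G_{b,i} > 0 and G_{s,i} > 0. Then the modified point obtained by replacing, for each such i, (G_{b,i}, G_{s,i}) with (G_{b,i} − G_{s,i}, 0) if G_{b,i} ≥ G_{s,i} or with (0, G_{s,i} − G_{b,i}) if G_{s,i} > G_{b,i}, is also feasible for (P1) and achieves a cost no larger than the original point (strictly smaller whenever α_{s,i} < α_{b,i} for some such i). Consequently, the infimum of (P1) is unchanged when the additional constraints G_{b,i} · G_{s,i} = 0 for all i are imposed. -/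
open scoped BigOperators ComplexConjugate

noncomputable section

/-- `hip h w = h^H w`, the Hermitian inner product used in the paper. -/
def hip {n : ℕ} (h w : Fin n → ℂ) : ℂ := ∑ x, (starRingEnd ℂ) (h x) * w x

/-- `bpow M i w = w^H B_i w`, the power contributed by the antennas of BS `i`. -/
def bpow (M : ℕ) {n : ℕ} (i : ℕ) (w : Fin n → ℂ) : ℝ :=
  ∑ x : Fin n, if (x : ℕ) / M = i then Complex.normSq (w x) else 0

/-- The SINR of user `k` for beamformers `w`. -/
def SINR {n K : ℕ} (h : Fin K → Fin n → ℂ) (σ : Fin K → ℝ)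
    (w : Fin K → Fin n → ℂ) (k : Fin K) : ℝ :=
  Complex.normSq (hip (h k) (w k)) /
    ((∑ l ∈ Finset.univ.erase k, Complex.normSq (hip (h k) (w l))) + (σ k) ^ 2)

/-- The total energy cost `Σ_i (α_{b,i} G_{b,i} − α_{s,i} G_{s,i})`. -/
def cost {N : ℕ} (αb αs Gb Gs : Fin N → ℝ) : ℝ := ∑ i, (αb i * Gb i - αs i * Gs i)

/-- Feasibility for problem (P1). -/
def FeasP1 {M N K : ℕ} (h : Fin K → Fin (M * N) → ℂ) (σ γ : Fin K → ℝ)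
    (E Pc Pmax : Fin N → ℝ) (w : Fin K → Fin (M * N) → ℂ) (Gb Gs : Fin N → ℝ) : Prop :=
  (∀ k, γ k ≤ SINR h σ w k) ∧
  (∀ i : Fin N, (∑ k, bpow M (i : ℕ) (w k)) + Pc i ≤ E i + Gb i - Gs i) ∧
  (∀ i : Fin N, (∑ k, bpow M (i : ℕ) (w k)) ≤ Pmax i) ∧
  (∀ i, 0 ≤ Gb i) ∧ (∀ i, 0 ≤ Gs i)

/-- The optimal value (infimum) of problem (P1), as an extended real. -/
def valP1 {M N K : ℕ} (h : Fin K → Fin (M * N) → ℂ) (σ γ : Fin K → ℝ)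
    (αb αs E Pc Pmax : Fin N → ℝ) : EReal :=
  sInf {c : EReal | ∃ (w : Fin K → Fin (M * N) → ℂ) (Gb Gs : Fin N → ℝ),
    FeasP1 h σ γ E Pc Pmax w Gb Gs ∧ c = (cost αb αs Gb Gs : ℝ)}

/-- removing the simultaneous buying-and-selling (replacing
`(G_b,i, G_s,i)` by `(G_b,i − G_s,i, 0)` or `(0, G_s,i − G_b,i)` at every BS where both
are positive, i.e. subtracting `min(G_b,i, G_s,i)` from both) preserves feasibility, does
not increase the cost, strictly decreases it when `α_s,i < α_b,i` at such a BS, and hence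
imposing `G_b,i · G_s,i = 0` does not change the optimal value of (P1). -/
theorem stmt_3 (M N K : ℕ) (hM : 0 < M) (hN : 0 < N) (hK : 0 < K)
    (h : Fin K → Fin (M * N) → ℂ) (σ γ : Fin K → ℝ)
    (hσ : ∀ k, 0 < σ k) (hγ : ∀ k, 0 < γ k)
    (αb αs E Pc Pmax : Fin N → ℝ)
    (hα : ∀ i, 0 < αs i ∧ αs i ≤ αb i) (hE : ∀ i, 0 ≤ E i)
    (hPc : ∀ i, 0 < Pc i) (hPmax : ∀ i, 0 < Pmax i) :
    (∀ (w : Fin K → Fin (M * N) → ℂ) (Gb Gs : Fin N → ℝ),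
      FeasP1 h σ γ E Pc Pmax w Gb Gs →
      (∃ i, 0 < Gb i ∧ 0 < Gs i) →
      (FeasP1 h σ γ E Pc Pmax w
          (fun i => Gb i - min (Gb i) (Gs i)) (fun i => Gs i - min (Gb i) (Gs i)) ∧
        cost αb αs (fun i => Gb i - min (Gb i) (Gs i)) (fun i => Gs i - min (Gb i) (Gs i))
          ≤ cost αb αs Gb Gs ∧
        ((∃ i, 0 < Gb i ∧ 0 < Gs i ∧ αs i < αb i) →
          cost αb αs (fun i => Gb i - min (Gb i) (Gs i)) (fun i => Gs i - min (Gb i) (Gs i))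
            < cost αb αs Gb Gs))) ∧
    valP1 h σ γ αb αs E Pc Pmax =
      sInf {c : EReal | ∃ (w : Fin K → Fin (M * N) → ℂ) (Gb Gs : Fin N → ℝ),
        FeasP1 h σ γ E Pc Pmax w Gb Gs ∧ (∀ i, Gb i * Gs i = 0) ∧
        c = (cost αb αs Gb Gs : ℝ)} := by
  have key : ∀ (w : Fin K → Fin (M * N) → ℂ) (Gb Gs : Fin N → ℝ),
      FeasP1 h σ γ E Pc Pmax w Gb Gs →
      FeasP1 h σ γ E Pc Pmax w (fun i => Gb i - min (Gb i) (Gs i))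
        (fun i => Gs i - min (Gb i) (Gs i)) ∧
      cost αb αs (fun i => Gb i - min (Gb i) (Gs i)) (fun i => Gs i - min (Gb i) (Gs i))
        ≤ cost αb αs Gb Gs := by
    intro w Gb Gs hf
    obtain ⟨h1, h2, h3, h4, h5⟩ := hf
    refine ⟨⟨h1, ?_, h3, ?_, ?_⟩, ?_⟩
    · intro i
      have := h2 i
      simp only
      linarith
    · intro i
      simp only [sub_nonneg]
      exact min_le_left _ _
    · intro i
      simp only [sub_nonneg]
      exact min_le_right _ _
    · unfold cost
      apply Finset.sum_le_sum
      intro i _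
      have hm : 0 ≤ min (Gb i) (Gs i) := le_min (h4 i) (h5 i)
      have := (hα i).2
      beta_reduce
      nlinarith
  have prodz : ∀ (Gb Gs : Fin N → ℝ) (i : Fin N),
      (Gb i - min (Gb i) (Gs i)) * (Gs i - min (Gb i) (Gs i)) = 0 := by
    intro Gb Gs i
    rcases le_total (Gb i) (Gs i) with hle | hle
    · rw [min_eq_left hle]; ring
    · rw [min_eq_right hle]; ring
  constructor
  · intro w Gb Gs hf _
    obtain ⟨hfeas, hle⟩ := key w Gb Gs hf
    refine ⟨hfeas, hle, ?_⟩
    rintro ⟨i0, hb0, hs0, hlt0⟩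
    unfold cost
    apply Finset.sum_lt_sum
    · intro i _
      have hm : 0 ≤ min (Gb i) (Gs i) := le_min (hf.2.2.2.1 i) (hf.2.2.2.2 i)
      have := (hα i).2
      beta_reduce
      nlinarith
    · refine ⟨i0, Finset.mem_univ i0, ?_⟩
      have hm : 0 < min (Gb i0) (Gs i0) := lt_min hb0 hs0
      beta_reduce
      nlinarith
  · apply le_antisymm
    · apply sInf_le_sInf
      rintro c ⟨w, Gb, Gs, hfeas, _, hc⟩
      exact ⟨w, Gb, Gs, hfeas, hc⟩
    · apply le_sInf
      rintro c ⟨w, Gb, Gs, hfeas, hc⟩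
      obtain ⟨hfeas', hle⟩ := key w Gb Gs hfeas
      refine le_trans (sInf_le ⟨w, _, _, hfeas', fun i => prodz Gb Gs i, rfl⟩) ?_
      rw [hc]
      exact_mod_cast hle
end
end

section
/- (Proposition 3.1, strong duality.) Assume problem (P1) admits a strictly feasible point (i.e., a feasible point at which all SINR constraints and all power constraints hold with strict inequality). Then the optimal value of the dual problem (D1), namely sup over μ_i ≥ 0, ν_i ≥ 0 of the dual function g({μ_i},{ν_i}), equals the optimal value (infimum) of the primal problem (P1), even though (P1) as stated is non-convex. -/
open scoped BigOperators ComplexConjugate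

noncomputable section

/-- The partial Lagrangian `L({w_k},{G_b,i},{G_s,i},{μ_i},{ν_i})` of (P1). -/
def lagr {M N K : ℕ} (αb αs E Pc Pmax μ ν : Fin N → ℝ)
    (w : Fin K → Fin (M * N) → ℂ) (Gb Gs : Fin N → ℝ) : ℝ :=
  (∑ k, ∑ i : Fin N, (μ i + ν i) * bpow M (i : ℕ) (w k))
    + (∑ i, (αb i - μ i) * Gb i) + (∑ i, (μ i - αs i) * Gs i)
    + (∑ i, (Pc i - E i) * μ i) - ∑ i, Pmax i * ν i

/-- The dual function `g({μ_i},{ν_i})`: the infimum of the Lagrangian over all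
`G_b,i ≥ 0`, `G_s,i ≥ 0` and all beamformers satisfying the SINR constraints. -/
def dualg {M N K : ℕ} (h : Fin K → Fin (M * N) → ℂ) (σ γ : Fin K → ℝ)
    (αb αs E Pc Pmax μ ν : Fin N → ℝ) : EReal :=
  sInf {c : EReal | ∃ (w : Fin K → Fin (M * N) → ℂ) (Gb Gs : Fin N → ℝ),
    (∀ i, 0 ≤ Gb i) ∧ (∀ i, 0 ≤ Gs i) ∧ (∀ k, γ k ≤ SINR h σ w k) ∧
    c = (lagr αb αs E Pc Pmax μ ν w Gb Gs : ℝ)}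

/-!
(P1) is not convex in the beamformers, but it is convex-like. Multiplying each `w_k` by a unit
complex number changes neither the SINRs nor the powers, and makes `h_kᴴ w_k` real and
nonnegative; for such beamformers the constraint `γ_k ≤ SINR_k` is the second-order cone
constraint `√γ_k ‖(h_kᴴ w_l)_{l ≠ k}, σ_k‖ ≤ h_kᴴ w_k`, which is convex. A convex combination of
two aligned feasible points is therefore SINR-feasible and, by convexity of `|·|²`, uses no
more power at any base station. Hence the set of (constraint values, cost) pairs dominated by
feasible points is convex, and the usual Slater argument applies: separate it by Hahn–Banach
from the open convex set `{constraints < 0, cost < p*}`; the Slater point forces the cost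
component of the separating functional to be positive, and normalising it yields multipliers
`μ, ν ≥ 0` with `g(μ, ν) ≥ p*`.
-/

open Set

section LagrangeDuality

variable {X ι : Type*}

theorem convex_setOf_exists_le {E : Type*} [AddCommMonoid E] [PartialOrder E]
    [IsOrderedAddMonoid E] [Module ℝ E] [PosSMulMono ℝ E] {S : Set X} {F : X → E}
    (hF : ∀ x ∈ S, ∀ y ∈ S, ∀ a b : ℝ, 0 ≤ a → 0 ≤ b → a + b = 1 →
      ∃ z ∈ S, F z ≤ a • F x + b • F y) :
    Convex ℝ {p | ∃ x ∈ S, F x ≤ p} := by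
  rintro p ⟨x, hx, hxp⟩ q ⟨y, hy, hyq⟩ a b ha hb hab
  obtain ⟨z, hz, hzle⟩ := hF x hx y hy a b ha hb hab
  exact ⟨z, hz, hzle.trans (add_le_add (smul_le_smul_of_nonneg_left hxp ha)
    (smul_le_smul_of_nonneg_left hyq hb))⟩

theorem nonpos_of_forall_nonneg_add_mul_lt {a b c : ℝ} (h : ∀ t : ℝ, 0 ≤ t → a + t * b < c) :
    b ≤ 0 := by
  by_contra! hb
  have hac : a < c := by simpa using h 0 le_rfl
  have := h ((c - a) / b) (div_nonneg (sub_nonneg.2 hac.le) hb.le)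
  rw [div_mul_cancel₀ _ hb.ne'] at this
  linarith

theorem ContinuousLinearMap.apply_eq_sum_mul_single [Fintype ι] [DecidableEq ι]
    (ℓ : (ι → ℝ) →L[ℝ] ℝ) (u : ι → ℝ) : ℓ u = ∑ i, u i * ℓ (Pi.single i 1) := by
  conv_lhs => rw [← Finset.univ_sum_single u]
  rw [map_sum]
  refine Finset.sum_congr rfl fun i _ => ?_
  rw [← smul_eq_mul, ← map_smul, ← Pi.single_smul, smul_eq_mul, mul_one]

theorem ContinuousLinearMap.apply_eq_apply_fst_add_mul {E : Type*} [TopologicalSpace E]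
    [AddCommMonoid E] [Module ℝ E] (φ : E × ℝ →L[ℝ] ℝ) (q : E × ℝ) :
    φ q = φ (q.1, 0) + q.2 * φ (0, 1) := by
  conv_lhs => rw [show q = (q.1, 0) + q.2 • ((0 : E), (1 : ℝ)) by ext <;> simp]
  rw [map_add, map_smul, smul_eq_mul]

section Separation

variable {φ : (ι → ℝ) × ℝ →L[ℝ] ℝ} {c p : ℝ}

theorem ContinuousLinearMap.apply_nonpos_of_forall_lt
    (hφ : ∀ q ∈ (Set.univ.pi fun _ => Iio 0) ×ˢ Iio p, φ q < c) {d : (ι → ℝ) × ℝ} (hd : d ≤ 0) :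
    φ d ≤ 0 := by
  refine nonpos_of_forall_nonneg_add_mul_lt (a := φ (fun _ => -1, p - 1)) (c := c)
    fun t ht => ?_
  have htd := smul_nonpos_of_nonneg_of_nonpos ht hd
  have hmem : ((fun _ => -1 : ι → ℝ), p - 1) + t • d ∈ (Set.univ.pi fun _ => Iio 0) ×ˢ Iio p :=
    ⟨fun i _ => by simpa using add_lt_of_lt_of_nonpos (by norm_num : (-1 : ℝ) < 0) (htd.1 i),
      add_lt_of_lt_of_nonpos (sub_one_lt p) htd.2⟩
  simpa using hφ _ hmem

theorem ContinuousLinearMap.apply_zero_le_of_forall_lt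
    (hφ : ∀ q ∈ (Set.univ.pi fun _ => Iio 0) ×ˢ Iio p, φ q < c) : φ (0, p) ≤ c := by
  have hclosure : ((0 : ι → ℝ), p) ∈ closure ((Set.univ.pi fun _ => Iio (0 : ℝ)) ×ˢ Iio p) := by
    rw [closure_prod_eq, closure_pi_set, closure_Iio, closure_Iio]
    exact ⟨fun _ _ => Set.mem_Iic.2 le_rfl, Set.mem_Iic.2 le_rfl⟩
  exact closure_minimal (fun q hq => (hφ q hq).le) (isClosed_le φ.continuous continuous_const)
    hclosure

end Separation

variable [Fintype ι] {S : Set X} {f : X → ℝ} {g : X → ι → ℝ}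

theorem exists_nonneg_forall_le_add_sum_mul
    (hconv : Convex ℝ {q : (ι → ℝ) × ℝ | ∃ x ∈ S, (g x, f x) ≤ q})
    (hslater : ∃ x ∈ S, ∀ i, g x i < 0) {p : ℝ} (hp : ∀ x ∈ S, g x ≤ 0 → p ≤ f x) :
    ∃ μ : ι → ℝ, 0 ≤ μ ∧ ∀ x ∈ S, p ≤ f x + ∑ i, μ i * g x i := by
  classical
  obtain ⟨x₀, hx₀S, hx₀⟩ := hslater
  set B : Set ((ι → ℝ) × ℝ) := (Set.univ.pi fun _ => Iio 0) ×ˢ Iio p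
  have hBconv : Convex ℝ B := (convex_pi fun _ _ => convex_Iio 0).prod (convex_Iio p)
  have hBopen : IsOpen B := (isOpen_set_pi finite_univ fun _ _ => isOpen_Iio).prod isOpen_Iio
  have hdisj : Disjoint B {q | ∃ x ∈ S, (g x, f x) ≤ q} := by
    refine Set.disjoint_left.2 fun q ⟨hq₁, hq₂⟩ ⟨x, hxS, hxq⟩ => ?_
    have hgx : g x ≤ 0 := fun i => (hxq.1 i).trans (hq₁ i trivial).le
    exact absurd (hp x hxS hgx) (not_le.2 (hxq.2.trans_lt hq₂))
  obtain ⟨φ, c, hφB, hφA⟩ := geometric_hahn_banach_open hBconv hBopen hconv hdisj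
  have hφS : ∀ x ∈ S, c ≤ φ (g x, f x) := fun x hx => hφA _ ⟨x, hx, le_rfl⟩
  set ℓ := φ.comp (ContinuousLinearMap.inl ℝ (ι → ℝ) ℝ)
  set τ := φ (0, 1)
  have hφ_apply : ∀ q, φ q = ℓ q.1 + q.2 * τ := φ.apply_eq_apply_fst_add_mul
  have hτ : 0 < τ := by
    have hτ_nonneg : 0 ≤ τ := by
      simpa [hφ_apply] using φ.apply_nonpos_of_forall_lt hφB (d := (0, -1)) ⟨le_rfl, by norm_num⟩
    refine hτ_nonneg.lt_of_ne fun hτ_zero => ?_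
    -- with `τ = 0` the Slater point separates from itself
    have hmem : (g x₀, p - 1) ∈ B := ⟨fun i _ => hx₀ i, by simp⟩
    have := (hφB _ hmem).trans_le (hφS x₀ hx₀S)
    simp [hφ_apply, ← hτ_zero] at this
  refine ⟨fun i => ℓ (Pi.single i 1) / τ, fun i => div_nonneg ?_ hτ.le, fun x hx => ?_⟩
  · simpa [hφ_apply] using
      φ.apply_nonpos_of_forall_lt hφB (d := (-Pi.single i 1, 0)) ⟨by simp, le_rfl⟩
  · have key : p * τ ≤ ℓ (g x) + f x * τ := by
      simpa [hφ_apply] using (φ.apply_zero_le_of_forall_lt hφB).trans (hφS x hx)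
    rw [ℓ.apply_eq_sum_mul_single] at key
    simp_rw [div_mul_eq_mul_div, ← Finset.sum_div, mul_comm (ℓ _)]
    have := (le_div_iff₀ hτ).2
      (show (p - f x) * τ ≤ ∑ i, g x i * ℓ (Pi.single i 1) by linarith)
    linarith

variable (S f g) in
def primalValue : EReal := sInf ((fun x => (f x : EReal)) '' {x ∈ S | g x ≤ 0})

variable (S f g) in
def lagrangeDual (μ : ι → ℝ) : EReal :=
  sInf ((fun x => ((f x + ∑ i, μ i * g x i : ℝ) : EReal)) '' S)

theorem lagrangeDual_le_primalValue {μ : ι → ℝ} (hμ : 0 ≤ μ) :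
    lagrangeDual S f g μ ≤ primalValue S f g := by
  refine le_sInf <| Set.forall_mem_image.2 fun x ⟨hxS, hxg⟩ => ?_
  have : ∑ i, μ i * g x i ≤ 0 :=
    Finset.sum_nonpos fun i _ => mul_nonpos_of_nonneg_of_nonpos (hμ i) (hxg i)
  exact (sInf_le (Set.mem_image_of_mem _ hxS)).trans (EReal.coe_le_coe_iff.2 (by linarith))

theorem exists_primalValue_le_lagrangeDual
    (hconv : Convex ℝ {q : (ι → ℝ) × ℝ | ∃ x ∈ S, (g x, f x) ≤ q})
    (hslater : ∃ x ∈ S, ∀ i, g x i < 0) :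
    ∃ μ : ι → ℝ, 0 ≤ μ ∧ primalValue S f g ≤ lagrangeDual S f g μ := by
  induction hP : primalValue S f g using EReal.rec with
  | bot => exact ⟨0, le_rfl, bot_le⟩
  | top =>
    obtain ⟨x₀, hx₀S, hx₀⟩ := hslater
    have : primalValue S f g ≤ f x₀ :=
      sInf_le (Set.mem_image_of_mem _ ⟨hx₀S, fun i => (hx₀ i).le⟩)
    simp [hP] at this
  | coe p =>
    have hp : ∀ x ∈ S, g x ≤ 0 → p ≤ f x := fun x hxS hxg =>
      EReal.coe_le_coe_iff.1 <| hP ▸ (sInf_le (Set.mem_image_of_mem _ ⟨hxS, hxg⟩) :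
        primalValue S f g ≤ f x)
    obtain ⟨μ, hμ, hle⟩ := exists_nonneg_forall_le_add_sum_mul hconv hslater hp
    exact ⟨μ, hμ, le_sInf <| Set.forall_mem_image.2 fun x hx => EReal.coe_le_coe (hle x hx)⟩

end LagrangeDuality

section Beamforming

variable {n K : ℕ}

theorem hip_add (h v v' : Fin n → ℂ) : hip h (v + v') = hip h v + hip h v' :=
  dotProduct_add (star h) v v'

theorem hip_smul {R : Type*} [Monoid R] [DistribMulAction R ℂ] [SMulCommClass R ℂ ℂ]
    (h v : Fin n → ℂ) (c : R) : hip h (c • v) = c • hip h v :=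
  dotProduct_smul c (star h) v

theorem Complex.normSq_smul_add_smul_le {a b : ℝ} (ha : 0 ≤ a) (hb : 0 ≤ b) (hab : a + b = 1)
    (z z' : ℂ) :
    normSq (a • z + b • z') ≤ a * normSq z + b * normSq z' := by
  obtain rfl : b = 1 - a := by linarith
  simp only [normSq_apply, real_smul, add_re, add_im, mul_re, mul_im, ofReal_re, ofReal_im]
  nlinarith [mul_nonneg ha hb, sq_nonneg (z.re - z'.re), sq_nonneg (z.im - z'.im)]

theorem bpow_smul_add_smul_le (M i : ℕ) {a b : ℝ} (ha : 0 ≤ a) (hb : 0 ≤ b) (hab : a + b = 1)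
    (v v' : Fin n → ℂ) : bpow M i (a • v + b • v') ≤ a * bpow M i v + b * bpow M i v' := by
  simp only [bpow, Finset.mul_sum, ← Finset.sum_add_distrib]
  refine Finset.sum_le_sum fun x _ => ?_
  split_ifs
  · exact Complex.normSq_smul_add_smul_le ha hb hab (v x) (v' x)
  · simp

theorem bpow_smul_of_norm_eq_one (M i : ℕ) {c : ℂ} (hc : ‖c‖ = 1) (v : Fin n → ℂ) :
    bpow M i (c • v) = bpow M i v := by
  simp [bpow, Complex.normSq_eq_norm_sq, hc]

variable (h : Fin K → Fin n → ℂ) (σ : Fin K → ℝ)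

theorem SINR_smul_of_norm_eq_one {c : Fin K → ℂ} (hc : ∀ k, ‖c k‖ = 1) (w : Fin K → Fin n → ℂ) :
    SINR h σ (fun k => c k • w k) = SINR h σ w := by
  funext k
  simp [SINR, hip_smul, Complex.normSq_eq_norm_sq, hc]

theorem exists_phase_rotation (w : Fin K → Fin n → ℂ) :
    ∃ c : Fin K → ℂ, (∀ k, ‖c k‖ = 1) ∧ ∀ k, hip (h k) (c k • w k) = ‖hip (h k) (w k)‖ := by
  choose c hc hcw using fun k => Complex.exists_norm_eq_mul_self (hip (h k) (w k))
  exact ⟨c, hc, fun k => by rw [hip_smul, smul_eq_mul, hcw]⟩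

def interference (w : Fin K → Fin n → ℂ) (k : Fin K) : EuclideanSpace ℂ (Fin K) :=
  WithLp.toLp 2 (Function.update (fun l => hip (h k) (w l)) k (σ k))

theorem norm_interference_sq (w : Fin K → Fin n → ℂ) (k : Fin K) :
    ‖interference h σ w k‖ ^ 2 =
      (∑ l ∈ Finset.univ.erase k, Complex.normSq (hip (h k) (w l))) + σ k ^ 2 := by
  rw [EuclideanSpace.norm_sq_eq, ← Finset.add_sum_erase _ _ (Finset.mem_univ k), add_comm]
  congr 1
  · refine Finset.sum_congr rfl fun l hl => ?_
    simp [interference, Function.update_of_ne (Finset.ne_of_mem_erase hl),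
      Complex.normSq_eq_norm_sq]
  · simp [interference]

theorem interference_smul_add_smul {a b : ℝ} (hab : a + b = 1) (w w' : Fin K → Fin n → ℂ)
    (k : Fin K) :
    interference h σ (a • w + b • w') k = a • interference h σ w k + b • interference h σ w' k := by
  ext l
  rcases eq_or_ne l k with rfl | hl
  · simp [interference, ← add_mul, ← Complex.ofReal_add, hab]
  · simp [interference, hl, hip_add, hip_smul]

variable {σ} {w : Fin K → Fin n → ℂ} {k : Fin K}

theorem le_SINR_iff (hσ : σ k ≠ 0) {γ : ℝ} (hγ : 0 ≤ γ) :
    γ ≤ SINR h σ w k ↔ √γ * ‖interference h σ w k‖ ≤ ‖hip (h k) (w k)‖ := by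
  have hpos : 0 < ‖interference h σ w k‖ ^ 2 := by
    rw [norm_interference_sq]
    exact add_pos_of_nonneg_of_pos (Finset.sum_nonneg fun _ _ => Complex.normSq_nonneg _)
      (pow_two_pos_of_ne_zero hσ)
  rw [SINR, ← norm_interference_sq, le_div_iff₀ hpos, Complex.normSq_eq_norm_sq,
    ← pow_le_pow_iff_left₀ (by positivity) (norm_nonneg _) two_ne_zero, mul_pow,
    Real.sq_sqrt hγ]

theorem le_SINR_smul_add_smul (hσ : σ k ≠ 0) {γ : ℝ} (hγ : 0 ≤ γ) {w' : Fin K → Fin n → ℂ}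
    (hw : γ ≤ SINR h σ w k) (hw' : γ ≤ SINR h σ w' k)
    (hwk : hip (h k) (w k) = ‖hip (h k) (w k)‖) (hw'k : hip (h k) (w' k) = ‖hip (h k) (w' k)‖)
    {a b : ℝ} (ha : 0 ≤ a) (hb : 0 ≤ b) (hab : a + b = 1) :
    γ ≤ SINR h σ (a • w + b • w') k := by
  rw [le_SINR_iff h hσ hγ] at hw hw' ⊢
  have hsignal : hip (h k) ((a • w + b • w') k) =
      ((a * ‖hip (h k) (w k)‖ + b * ‖hip (h k) (w' k)‖ : ℝ) : ℂ) := by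
    simp only [Pi.add_apply, Pi.smul_apply, hip_add, hip_smul]
    rw [hwk, hw'k]
    simp [Complex.real_smul]
  calc √γ * ‖interference h σ (a • w + b • w') k‖
      ≤ a * (√γ * ‖interference h σ w k‖) + b * (√γ * ‖interference h σ w' k‖) := by
        rw [interference_smul_add_smul h σ hab]
        nlinarith [norm_add_le (a • interference h σ w k) (b • interference h σ w' k),
          norm_smul_of_nonneg ha (interference h σ w k),
          norm_smul_of_nonneg hb (interference h σ w' k),
          Real.sqrt_nonneg γ]
    _ ≤ a * ‖hip (h k) (w k)‖ + b * ‖hip (h k) (w' k)‖ := by gcongr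
    _ = ‖hip (h k) ((a • w + b • w') k)‖ := by
        rw [hsignal, Complex.norm_real, Real.norm_of_nonneg (by positivity)]

theorem exists_le_SINR_bpow_le_smul_add_smul (hσ : ∀ k, σ k ≠ 0) {γ : Fin K → ℝ} (hγ : ∀ k, 0 ≤ γ k)
    {w' : Fin K → Fin n → ℂ} (hw : ∀ k, γ k ≤ SINR h σ w k) (hw' : ∀ k, γ k ≤ SINR h σ w' k)
    {a b : ℝ} (ha : 0 ≤ a) (hb : 0 ≤ b) (hab : a + b = 1) :
    ∃ w'' : Fin K → Fin n → ℂ, (∀ k, γ k ≤ SINR h σ w'' k) ∧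
      ∀ M i k, bpow M i (w'' k) ≤ a * bpow M i (w k) + b * bpow M i (w' k) := by
  obtain ⟨c, hc, hcw⟩ := exists_phase_rotation h w
  obtain ⟨c', hc', hcw'⟩ := exists_phase_rotation h w'
  have aligned : ∀ {y z : ℂ}, y = ‖z‖ → y = ‖y‖ := fun hy => by
    rw [hy, Complex.norm_real, norm_norm]
  refine ⟨a • (fun k => c k • w k) + b • (fun k => c' k • w' k), fun k => ?_, fun M i k => ?_⟩
  · refine le_SINR_smul_add_smul h (hσ k) (hγ k) ?_ ?_ (aligned (hcw k)) (aligned (hcw' k))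
      ha hb hab
    · rw [SINR_smul_of_norm_eq_one h σ hc]; exact hw k
    · rw [SINR_smul_of_norm_eq_one h σ hc']; exact hw' k
  · refine (bpow_smul_add_smul_le M i ha hb hab _ _).trans_eq ?_
    rw [bpow_smul_of_norm_eq_one M i (hc k), bpow_smul_of_norm_eq_one M i (hc' k)]

end Beamforming

section EnergyCostMinimization

variable {M N K : ℕ}

def sinrFeasibleSet (h : Fin K → Fin (M * N) → ℂ) (σ γ : Fin K → ℝ) :
    Set ((Fin K → Fin (M * N) → ℂ) × (Fin N → ℝ) × (Fin N → ℝ)) :=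
  {x | (∀ k, γ k ≤ SINR h σ x.1 k) ∧ 0 ≤ x.2.1 ∧ 0 ≤ x.2.2}

def powerConstraints (E Pc Pmax : Fin N → ℝ)
    (x : (Fin K → Fin (M * N) → ℂ) × (Fin N → ℝ) × (Fin N → ℝ)) : Fin N ⊕ Fin N → ℝ :=
  Sum.elim (fun i => (∑ k, bpow M i (x.1 k)) + Pc i - (E i + x.2.1 i - x.2.2 i))
    (fun i => (∑ k, bpow M i (x.1 k)) - Pmax i)

theorem cost_smul_add_smul (αb αs Gb Gs Gb' Gs' : Fin N → ℝ) (a b : ℝ) :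
    cost αb αs (a • Gb + b • Gb') (a • Gs + b • Gs') =
      a * cost αb αs Gb Gs + b * cost αb αs Gb' Gs' := by
  simp only [cost, Finset.mul_sum, ← Finset.sum_add_distrib, Pi.add_apply, Pi.smul_apply,
    smul_eq_mul]
  exact Finset.sum_congr rfl fun i _ => by ring

theorem lagr_eq_cost_add_sum (αb αs E Pc Pmax μ ν : Fin N → ℝ) (w : Fin K → Fin (M * N) → ℂ)
    (Gb Gs : Fin N → ℝ) :
    lagr αb αs E Pc Pmax μ ν w Gb Gs =
      cost αb αs Gb Gs + ∑ j, Sum.elim μ ν j * powerConstraints E Pc Pmax (w, Gb, Gs) j := by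
  simp only [lagr, cost, powerConstraints, Fintype.sum_sum_type, Sum.elim_inl, Sum.elim_inr]
  rw [Finset.sum_comm]
  simp only [mul_add, mul_sub, sub_mul, add_mul, Finset.sum_add_distrib, Finset.sum_sub_distrib,
    Finset.mul_sum, mul_comm (Pc _), mul_comm (E _), mul_comm (Pmax _)]
  ring

variable (h : Fin K → Fin (M * N) → ℂ) (σ γ : Fin K → ℝ) (αb αs E Pc Pmax : Fin N → ℝ)

theorem valP1_eq_primalValue :
    valP1 h σ γ αb αs E Pc Pmax = primalValue (sinrFeasibleSet h σ γ)
      (fun x => cost αb αs x.2.1 x.2.2) (powerConstraints E Pc Pmax) := by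
  simp only [valP1, primalValue, FeasP1, sinrFeasibleSet, powerConstraints, Set.image,
    Pi.le_def, Pi.zero_apply, Sum.forall, Sum.elim_inl, Sum.elim_inr, sub_nonpos, Prod.exists,
    Set.mem_ofPred_eq]
  congr 1
  ext c
  constructor
  · rintro ⟨w, Gb, Gs, ⟨hsinr, hE, hPmax, hGb, hGs⟩, rfl⟩
    exact ⟨w, Gb, Gs, ⟨⟨hsinr, hGb, hGs⟩, hE, hPmax⟩, rfl⟩
  · rintro ⟨w, Gb, Gs, ⟨⟨hsinr, hGb, hGs⟩, hE, hPmax⟩, rfl⟩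
    exact ⟨w, Gb, Gs, ⟨hsinr, hE, hPmax, hGb, hGs⟩, rfl⟩

theorem dualg_eq_lagrangeDual (μ ν : Fin N → ℝ) :
    dualg h σ γ αb αs E Pc Pmax μ ν = lagrangeDual (sinrFeasibleSet h σ γ)
      (fun x => cost αb αs x.2.1 x.2.2) (powerConstraints E Pc Pmax) (Sum.elim μ ν) := by
  simp only [dualg, lagrangeDual, sinrFeasibleSet, lagr_eq_cost_add_sum, Set.image,
    Pi.le_def, Prod.exists, Set.mem_ofPred_eq]
  congr 1
  ext c
  constructor
  · rintro ⟨w, Gb, Gs, hGb, hGs, hsinr, rfl⟩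
    exact ⟨w, Gb, Gs, ⟨hsinr, hGb, hGs⟩, rfl⟩
  · rintro ⟨w, Gb, Gs, ⟨hsinr, hGb, hGs⟩, rfl⟩
    exact ⟨w, Gb, Gs, hGb, hGs, hsinr, rfl⟩

variable {h σ γ} in
theorem convex_setOf_powerConstraints_cost_le (hσ : ∀ k, σ k ≠ 0) (hγ : ∀ k, 0 ≤ γ k) :
    Convex ℝ {q : (Fin N ⊕ Fin N → ℝ) × ℝ | ∃ x ∈ sinrFeasibleSet h σ γ,
      (powerConstraints E Pc Pmax x, cost αb αs x.2.1 x.2.2) ≤ q} := by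
  refine convex_setOf_exists_le ?_
  rintro ⟨w, Gb, Gs⟩ ⟨hw, hGb, hGs⟩ ⟨w', Gb', Gs'⟩ ⟨hw', hGb', hGs'⟩ a b ha hb hab
  obtain ⟨w'', hw'', hpow⟩ := exists_le_SINR_bpow_le_smul_add_smul h hσ hγ hw hw' ha hb hab
  have hsum : ∀ i : Fin N, ∑ k, bpow M i (w'' k) ≤
      a * ∑ k, bpow M i (w k) + b * ∑ k, bpow M i (w' k) := fun i => by
    rw [Finset.mul_sum, Finset.mul_sum, ← Finset.sum_add_distrib]
    exact Finset.sum_le_sum fun k _ => hpow M i k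
  refine ⟨(w'', a • Gb + b • Gb', a • Gs + b • Gs'),
    ⟨hw'', add_nonneg (smul_nonneg ha hGb) (smul_nonneg hb hGb'),
      add_nonneg (smul_nonneg ha hGs) (smul_nonneg hb hGs')⟩, ?_, ?_⟩
  · refine Sum.forall.2 ⟨fun i => ?_, fun i => ?_⟩
    · simp only [powerConstraints, Prod.fst_add, Prod.smul_fst, Pi.add_apply, Pi.smul_apply,
        smul_eq_mul, Sum.elim_inl]
      linear_combination hsum i - (Pc i - E i) * hab
    · simp only [powerConstraints, Prod.fst_add, Prod.smul_fst, Pi.add_apply, Pi.smul_apply,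
        smul_eq_mul, Sum.elim_inr]
      linear_combination hsum i + Pmax i * hab
  · simp [cost_smul_add_smul]

end EnergyCostMinimization

theorem stmt_6_general (M N K : ℕ)
    (h : Fin K → Fin (M * N) → ℂ) (σ γ : Fin K → ℝ)
    (hσ : ∀ k, 0 < σ k) (hγ : ∀ k, 0 < γ k)
    (αb αs E Pc Pmax : Fin N → ℝ)
    (hslater : ∃ (w : Fin K → Fin (M * N) → ℂ) (Gb Gs : Fin N → ℝ),
      (∀ i, 0 ≤ Gb i) ∧ (∀ i, 0 ≤ Gs i) ∧
      (∀ k, γ k < SINR h σ w k) ∧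
      (∀ i : Fin N, (∑ k, bpow M (i : ℕ) (w k)) + Pc i < E i + Gb i - Gs i) ∧
      (∀ i : Fin N, (∑ k, bpow M (i : ℕ) (w k)) < Pmax i)) :
    sSup {v : EReal | ∃ μ ν : Fin N → ℝ, (∀ i, 0 ≤ μ i) ∧ (∀ i, 0 ≤ ν i) ∧
        v = dualg h σ γ αb αs E Pc Pmax μ ν}
      = valP1 h σ γ αb αs E Pc Pmax := by
  obtain ⟨w, Gb, Gs, hGb, hGs, hsinr, hE, hPmax⟩ := hslater
  have hstrict : ∀ j, powerConstraints E Pc Pmax (w, Gb, Gs) j < 0 := Sum.forall.2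
    ⟨fun i => by simpa [powerConstraints] using hE i,
      fun i => by simpa [powerConstraints] using hPmax i⟩
  obtain ⟨μ, hμ, hle⟩ := exists_primalValue_le_lagrangeDual
    (convex_setOf_powerConstraints_cost_le αb αs E Pc Pmax (fun k => (hσ k).ne') fun k => (hγ k).le)
    ⟨(w, Gb, Gs), ⟨fun k => (hsinr k).le, hGb, hGs⟩, hstrict⟩
  rw [valP1_eq_primalValue]
  refine le_antisymm (sSup_le ?_) (hle.trans (le_sSup ⟨μ ∘ Sum.inl, μ ∘ Sum.inr,
    fun i => hμ _, fun i => hμ _, by rw [dualg_eq_lagrangeDual, Sum.elim_comp_inl_inr]⟩))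
  rintro _ ⟨μ, ν, hμ, hν, rfl⟩
  rw [dualg_eq_lagrangeDual]
  exact lagrangeDual_le_primalValue (Sum.forall.2 ⟨hμ, hν⟩)

/-- Proposition 3.1, strong duality: if (P1) has a strictly feasible
point, then the optimal value of the dual problem (D1) equals the optimal value of
the primal problem (P1). -/
theorem stmt_6 (M N K : ℕ) (hM : 0 < M) (hN : 0 < N) (hK : 0 < K)
    (h : Fin K → Fin (M * N) → ℂ) (σ γ : Fin K → ℝ)
    (hσ : ∀ k, 0 < σ k) (hγ : ∀ k, 0 < γ k)
    (αb αs E Pc Pmax : Fin N → ℝ)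
    (hα : ∀ i, 0 < αs i ∧ αs i ≤ αb i) (hE : ∀ i, 0 ≤ E i)
    (hPc : ∀ i, 0 < Pc i) (hPmax : ∀ i, 0 < Pmax i)
    (hslater : ∃ (w : Fin K → Fin (M * N) → ℂ) (Gb Gs : Fin N → ℝ),
      (∀ i, 0 ≤ Gb i) ∧ (∀ i, 0 ≤ Gs i) ∧
      (∀ k, γ k < SINR h σ w k) ∧
      (∀ i : Fin N, (∑ k, bpow M (i : ℕ) (w k)) + Pc i < E i + Gb i - Gs i) ∧
      (∀ i : Fin N, (∑ k, bpow M (i : ℕ) (w k)) < Pmax i)) :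
    sSup {v : EReal | ∃ μ ν : Fin N → ℝ, (∀ i, 0 ≤ μ i) ∧ (∀ i, 0 ≤ ν i) ∧
        v = dualg h σ γ αb αs E Pc Pmax μ ν}
      = valP1 h σ γ αb αs E Pc Pmax :=
  stmt_6_general M N K h σ γ hσ hγ αb αs E Pc Pmax hslater
end
end

section
/- Let B be an n×n Hermitian positive definite matrix, a ∈ ℂ^n a nonzero vector, and c > 0. Then a^H B^{-1} a is a positive real number, and the minimum of w^H B w over all w ∈ ℂ^n satisfying Re(a^H w) ≥ c equals c² / (a^H B^{-1} a), attained uniquely at w* = (c / (a^H B^{-1} a)) · B^{-1} a. -/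
/-!
For the inner product `⟨x, y⟩_B = x^H B y`, the functional `w ↦ a^H w` is represented by
`u = B⁻¹ a`, and `⟨u, u⟩_B = a^H B⁻¹ a =: t > 0`. Splitting `w = (a^H w / t) u + d` with `d`
`B`-orthogonal to `u` gives `w^H B w = |a^H w|² / t + d^H B d ≥ c² / t` whenever `Re (a^H w) ≥ c`,
with equality exactly when `d = 0` and `a^H w = c`.
-/

open scoped ComplexOrder
open Matrix

lemma Complex.sq_le_normSq_of_le_re {c : ℝ} {z : ℂ} (hc : 0 ≤ c) (h : c ≤ z.re) :
    c ^ 2 ≤ Complex.normSq z := by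
  rw [Complex.normSq_apply]
  nlinarith [sq_nonneg z.im]

lemma Complex.eq_ofReal_of_le_re_of_normSq_eq {c : ℝ} {z : ℂ} (hc : 0 ≤ c) (h : c ≤ z.re)
    (hz : Complex.normSq z = c ^ 2) : z = c := by
  rw [Complex.normSq_apply] at hz
  have hre : z.re = c := by nlinarith [sq_nonneg z.im]
  have him : z.im = 0 := by nlinarith
  exact Complex.ext hre him

namespace Matrix

variable {ι : Type*} [Fintype ι]

section CommRing

variable {R : Type*} [CommRing R] [StarRing R] {B : Matrix ι ι R}

lemma IsHermitian.dotProduct_mulVec_add_self_of_orthogonal (hB : B.IsHermitian) {x y : ι → R}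
    (hxy : star x ⬝ᵥ B *ᵥ y = 0) :
    star (x + y) ⬝ᵥ B *ᵥ (x + y) = star x ⬝ᵥ B *ᵥ x + star y ⬝ᵥ B *ᵥ y := by
  have hyx : star y ⬝ᵥ B *ᵥ x = 0 := by
    rw [← star_star (star y ⬝ᵥ B *ᵥ x), star_dotProduct, star_mulVec, hB.eq,
      ← dotProduct_mulVec, star_star, hxy, star_zero]
  simp only [star_add, add_dotProduct, mulVec_add, dotProduct_add, hxy, hyx]
  ring

lemma IsHermitian.star_inv_mulVec_dotProduct_mulVec [DecidableEq ι] (hB : B.IsHermitian)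
    (hdet : IsUnit B.det) (a x : ι → R) : star (B⁻¹ *ᵥ a) ⬝ᵥ B *ᵥ x = star a ⬝ᵥ x := by
  have h : star (B⁻¹ *ᵥ a) ᵥ* B = star a :=
    calc star (B⁻¹ *ᵥ a) ᵥ* B = star (B *ᵥ B⁻¹ *ᵥ a) := by rw [star_mulVec B, hB.eq]
      _ = star a := by rw [mulVec_mulVec, mul_nonsing_inv _ hdet, one_mulVec]
  rw [dotProduct_mulVec, h]

end CommRing

variable {B : Matrix ι ι ℂ}

lemma IsHermitian.coe_re_star_dotProduct_mulVec_self (hB : B.IsHermitian) (x : ι → ℂ) :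
    ((star x ⬝ᵥ B *ᵥ x).re : ℂ) = star x ⬝ᵥ B *ᵥ x :=
  Complex.ext rfl (by simpa using (hB.im_star_dotProduct_mulVec_self x).symm)

lemma IsHermitian.star_dotProduct_mulVec_self_eq [DecidableEq ι] (hB : B.IsHermitian)
    (hdet : IsUnit B.det) (a w : ι → ℂ) :
    let t := star a ⬝ᵥ B⁻¹ *ᵥ a
    let d := w - (star a ⬝ᵥ w / t) • B⁻¹ *ᵥ a
    star w ⬝ᵥ B *ᵥ w = Complex.normSq (star a ⬝ᵥ w) / t + star d ⬝ᵥ B *ᵥ d := by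
  intro t d
  have ht_def : t = star a ⬝ᵥ B⁻¹ *ᵥ a := rfl
  have hd_def : d = w - (star a ⬝ᵥ w / t) • B⁻¹ *ᵥ a := rfl
  clear_value t d
  have ht : star t = t := by
    rw [ht_def, ← hB.inv.coe_re_star_dotProduct_mulVec_self a, Complex.star_def,
      Complex.conj_ofReal]
  by_cases h0 : t = 0
  · simp [hd_def, h0]
  set r := star a ⬝ᵥ w / t
  have hrt : r * t = star a ⬝ᵥ w := div_mul_cancel₀ _ h0
  have horth : star (r • B⁻¹ *ᵥ a) ⬝ᵥ B *ᵥ d = 0 := by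
    rw [star_smul, smul_dotProduct, hB.star_inv_mulVec_dotProduct_mulVec hdet, hd_def,
      dotProduct_sub, dotProduct_smul, ← ht_def, smul_eq_mul, smul_eq_mul, hrt, sub_self,
      mul_zero]
  have hw : w = r • B⁻¹ *ᵥ a + d := by rw [hd_def, add_sub_cancel]
  calc star w ⬝ᵥ B *ᵥ w = star (r • B⁻¹ *ᵥ a + d) ⬝ᵥ B *ᵥ (r • B⁻¹ *ᵥ a + d) := by rw [← hw]
    _ = star (r • B⁻¹ *ᵥ a) ⬝ᵥ B *ᵥ (r • B⁻¹ *ᵥ a) + star d ⬝ᵥ B *ᵥ d :=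
      hB.dotProduct_mulVec_add_self_of_orthogonal horth
    _ = Complex.normSq (star a ⬝ᵥ w) / t + star d ⬝ᵥ B *ᵥ d := by
      rw [star_smul, smul_dotProduct, mulVec_smul, dotProduct_smul,
        hB.star_inv_mulVec_dotProduct_mulVec hdet, ← ht_def, Complex.normSq_eq_conj_mul_self]
      simp only [smul_eq_mul, r, star_div₀, ht]
      field_simp
      rw [Complex.star_def]
      ring

lemma IsHermitian.re_star_dotProduct_mulVec_self_eq [DecidableEq ι] (hB : B.IsHermitian)
    (hdet : IsUnit B.det) (a w : ι → ℂ) :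
    let τ := (star a ⬝ᵥ B⁻¹ *ᵥ a).re
    let d := w - (star a ⬝ᵥ w / (star a ⬝ᵥ B⁻¹ *ᵥ a)) • B⁻¹ *ᵥ a
    (star w ⬝ᵥ B *ᵥ w).re = Complex.normSq (star a ⬝ᵥ w) / τ + (star d ⬝ᵥ B *ᵥ d).re := by
  intro τ d
  rw [hB.star_dotProduct_mulVec_self_eq hdet a w, Complex.add_re]
  congr 1
  rw [← hB.inv.coe_re_star_dotProduct_mulVec_self a, Complex.div_ofReal_re, Complex.ofReal_re]

lemma IsHermitian.star_smul_inv_mulVec_dotProduct_mulVec_smul [DecidableEq ι]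
    (hB : B.IsHermitian) (hdet : IsUnit B.det) (a : ι → ℂ) (x : ℂ) :
    star (x • B⁻¹ *ᵥ a) ⬝ᵥ B *ᵥ (x • B⁻¹ *ᵥ a) = star x * x * (star a ⬝ᵥ B⁻¹ *ᵥ a) := by
  rw [star_smul, smul_dotProduct, hB.star_inv_mulVec_dotProduct_mulVec hdet, dotProduct_smul,
    smul_eq_mul, smul_eq_mul, mul_assoc]

namespace PosDef

variable [DecidableEq ι] (hB : B.PosDef) {a : ι → ℂ} {c : ℝ}
include hB

lemma re_star_dotProduct_inv_mulVec_pos (ha : a ≠ 0) : 0 < (star a ⬝ᵥ B⁻¹ *ᵥ a).re :=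
  (Complex.pos_iff.1 (hB.inv.dotProduct_mulVec_pos ha)).1

lemma div_re_le_re_star_dotProduct_mulVec_self (hc : 0 ≤ c) {w : ι → ℂ}
    (hw : c ≤ (star a ⬝ᵥ w).re) :
    c ^ 2 / (star a ⬝ᵥ B⁻¹ *ᵥ a).re ≤ (star w ⬝ᵥ B *ᵥ w).re := by
  rw [hB.isHermitian.re_star_dotProduct_mulVec_self_eq hB.det_pos.ne'.isUnit a w]
  have hτ := (Complex.nonneg_iff.1 (hB.inv.posSemidef.dotProduct_mulVec_nonneg a)).1
  have hd := (Complex.nonneg_iff.1 (hB.posSemidef.dotProduct_mulVec_nonneg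
    (w - (star a ⬝ᵥ w / (star a ⬝ᵥ B⁻¹ *ᵥ a)) • B⁻¹ *ᵥ a))).1
  have hs := Complex.sq_le_normSq_of_le_re hc hw
  calc c ^ 2 / (star a ⬝ᵥ B⁻¹ *ᵥ a).re
      ≤ Complex.normSq (star a ⬝ᵥ w) / (star a ⬝ᵥ B⁻¹ *ᵥ a).re := by gcongr
    _ ≤ _ := le_add_of_nonneg_right hd

lemma eq_smul_inv_mulVec_of_re_star_dotProduct_mulVec_self_eq (ha : a ≠ 0) (hc : 0 ≤ c)
    {w : ι → ℂ} (hw : c ≤ (star a ⬝ᵥ w).re)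
    (heq : (star w ⬝ᵥ B *ᵥ w).re = c ^ 2 / (star a ⬝ᵥ B⁻¹ *ᵥ a).re) :
    w = ((c / (star a ⬝ᵥ B⁻¹ *ᵥ a).re : ℝ) : ℂ) • B⁻¹ *ᵥ a := by
  have hτ := hB.re_star_dotProduct_inv_mulVec_pos ha
  have hdecomp := hB.isHermitian.re_star_dotProduct_mulVec_self_eq hB.det_pos.ne'.isUnit a w
  dsimp only at hdecomp
  set s := star a ⬝ᵥ w
  set d := w - (s / (star a ⬝ᵥ B⁻¹ *ᵥ a)) • B⁻¹ *ᵥ a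
  have hd_nonneg := (Complex.nonneg_iff.1 (hB.posSemidef.dotProduct_mulVec_nonneg d)).1
  have hs : c ^ 2 / (star a ⬝ᵥ B⁻¹ *ᵥ a).re ≤ Complex.normSq s / (star a ⬝ᵥ B⁻¹ *ᵥ a).re := by
    gcongr
    exact Complex.sq_le_normSq_of_le_re hc hw
  have hns : Complex.normSq s = c ^ 2 :=
    (div_left_inj' hτ.ne').1 (by linarith)
  have hd0 : d = 0 := by
    by_contra h
    linarith [(Complex.pos_iff.1 (hB.dotProduct_mulVec_pos h)).1]
  calc w = (s / (star a ⬝ᵥ B⁻¹ *ᵥ a)) • B⁻¹ *ᵥ a := sub_eq_zero.1 hd0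
    _ = _ := by
      rw [Complex.eq_ofReal_of_le_re_of_normSq_eq hc hw hns, Complex.ofReal_div,
        hB.inv.isHermitian.coe_re_star_dotProduct_mulVec_self]

lemma isLeast_re_star_dotProduct_mulVec_self (ha : a ≠ 0) (hc : 0 ≤ c) :
    IsLeast {v : ℝ | ∃ w : ι → ℂ, c ≤ (star a ⬝ᵥ w).re ∧ v = (star w ⬝ᵥ B *ᵥ w).re}
      (c ^ 2 / (star a ⬝ᵥ B⁻¹ *ᵥ a).re) := by
  have hτ := hB.re_star_dotProduct_inv_mulVec_pos ha
  refine ⟨⟨((c / (star a ⬝ᵥ B⁻¹ *ᵥ a).re : ℝ) : ℂ) • B⁻¹ *ᵥ a, ?_, ?_⟩, ?_⟩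
  · rw [dotProduct_smul, smul_eq_mul, Complex.re_ofReal_mul, div_mul_cancel₀ _ hτ.ne']
  · rw [hB.isHermitian.star_smul_inv_mulVec_dotProduct_mulVec_smul
      hB.det_pos.ne'.isUnit, Complex.star_def, Complex.conj_ofReal,
      ← Complex.ofReal_mul, Complex.re_ofReal_mul]
    field_simp
  · rintro v ⟨w, hw, rfl⟩
    exact hB.div_re_le_re_star_dotProduct_mulVec_self hc hw

end PosDef

end Matrix

theorem stmt_10_general (n : ℕ) (B : Matrix (Fin n) (Fin n) ℂ)
    (hB : B.PosDef) (a : Fin n → ℂ) (ha : a ≠ 0) (c : ℝ) (hc : 0 < c) :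
    ((star a ⬝ᵥ B⁻¹ *ᵥ a).im = 0 ∧ 0 < (star a ⬝ᵥ B⁻¹ *ᵥ a).re) ∧
    IsLeast {v : ℝ | ∃ w : Fin n → ℂ, c ≤ (star a ⬝ᵥ w).re ∧ v = (star w ⬝ᵥ B *ᵥ w).re}
      (c ^ 2 / (star a ⬝ᵥ B⁻¹ *ᵥ a).re) ∧
    (∀ w : Fin n → ℂ, c ≤ (star a ⬝ᵥ w).re →
      (star w ⬝ᵥ B *ᵥ w).re = c ^ 2 / (star a ⬝ᵥ B⁻¹ *ᵥ a).re →
      w = ((c / (star a ⬝ᵥ B⁻¹ *ᵥ a).re : ℝ) : ℂ) • (B⁻¹ *ᵥ a)) := by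
  obtain ⟨hre, him⟩ := Complex.pos_iff.1 (hB.inv.dotProduct_mulVec_pos ha)
  exact ⟨⟨him.symm, hre⟩, hB.isLeast_re_star_dotProduct_mulVec_self ha hc.le,
    fun w hw heq ↦ hB.eq_smul_inv_mulVec_of_re_star_dotProduct_mulVec_self_eq ha hc.le hw heq⟩

/-- for Hermitian positive definite `B`, nonzero `a` and `c > 0`,
`a^H B⁻¹ a` is a positive real, and the minimum of `w^H B w` over `Re(a^H w) ≥ c`
equals `c² / (a^H B⁻¹ a)`, attained uniquely at `w* = (c / (a^H B⁻¹ a)) · B⁻¹ a`. -/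
theorem stmt_10 (n : ℕ) (hn : 0 < n) (B : Matrix (Fin n) (Fin n) ℂ)
    (hB : B.PosDef) (a : Fin n → ℂ) (ha : a ≠ 0) (c : ℝ) (hc : 0 < c) :
    ((star a ⬝ᵥ B⁻¹ *ᵥ a).im = 0 ∧ 0 < (star a ⬝ᵥ B⁻¹ *ᵥ a).re) ∧
    IsLeast {v : ℝ | ∃ w : Fin n → ℂ, c ≤ (star a ⬝ᵥ w).re ∧ v = (star w ⬝ᵥ B *ᵥ w).re}
      (c ^ 2 / (star a ⬝ᵥ B⁻¹ *ᵥ a).re) ∧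
    (∀ w : Fin n → ℂ, c ≤ (star a ⬝ᵥ w).re →
      (star w ⬝ᵥ B *ᵥ w).re = c ^ 2 / (star a ⬝ᵥ B⁻¹ *ᵥ a).re →
      w = ((c / (star a ⬝ᵥ B⁻¹ *ᵥ a).re : ℝ) : ℂ) • (B⁻¹ *ᵥ a)) :=
  stmt_10_general n B hB a ha c hc
end
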